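/- For the game CSG({1,...,N}) with N ≥ 3 and any nonnegative integers k, ℓ: if the number of vertices of S(1,k,ℓ), namely k+ℓ+2, is ≡ 0 mod (N+1), then its Grundy value is 0; if k+ℓ+2 ≡ 1 mod (N+1), then its Grundy value is 1; otherwise its Grundy value is strictly greater than 1. -/

import Mathlib

/-!
A move of CSG({1,…,N}) removes between `1` and `N` vertices, so it always changes the number of
vertices modulo `N + 1`. Hence, by induction over positions, the Grundy value is `0` exactly at
residue `0` and `1` exactly at residue `1`, provided that from every connected position of residue
`r ≠ 0` some move removes `r` vertices and, if `r ≥ 2`, some move removes `r - 1` vertices. This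
holds on every graph in which any `d` vertices can be cut off a connected set as a connected piece
with connected rest, except possibly when `d ≥ 2` is exactly half of the set.

`S(1,k,ℓ)` is an induced subgraph of the line `ℕ` with one pendant vertex attached at `k`. The
connected sets of the latter are intervals, possibly together with the pendant vertex, and cutting
them by hand fails only for the halves of the sets shaped like `S(1,d-1,d-1)`.
-/

open SimpleGraph

/-- The minimum excludant of a set of naturals. -/
noncomputable def mex (s : Set ℕ) : ℕ := sInf {n | n ∉ s}

/-- The graph induced on a set of vertices is connected. -/
def ConnOn {V : Type*} (G : SimpleGraph V) (s : Set V) : Prop := (G.induce s).Connected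

/-- A legal move in the connected subtraction game CSG(L) on the graph `G`:
from remaining vertex set `s`, remove the (nonempty) connected set `s \ t` whose
cardinality lies in `L`, leaving `t`, which must be empty or induce a connected graph. -/
def CsgMove {V : Type*} [DecidableEq V] (G : SimpleGraph V) (L : Set ℕ)
    (s t : Finset V) : Prop :=
  t ⊆ s ∧ (s \ t).Nonempty ∧ (s \ t).card ∈ L ∧
    ConnOn G (↑(s \ t) : Set V) ∧ (t = ∅ ∨ ConnOn G (↑t : Set V))

/-- The Grundy value of the position with remaining vertex set `s` in the game
CSG(L) played on `G`, defined by the mex recursion over all legal moves. -/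
noncomputable def csgGrundy {V : Type*} [DecidableEq V] (G : SimpleGraph V) (L : Set ℕ)
    (s : Finset V) : ℕ :=
  mex (Set.range fun t : {t : Finset V // CsgMove G L s t} =>
    have : t.1.card < s.card := by
      obtain ⟨x, hx⟩ := t.2.2.1
      rw [Finset.mem_sdiff] at hx
      exact Finset.card_lt_card ((Finset.ssubset_iff_of_subset t.2.1).2 ⟨x, hx.1, hx.2⟩)
    csgGrundy G L t.1)
termination_by s.card
decreasing_by exact this

/-- The subdivided star with `t` branches of lengths `l 0, …, l (t-1)` appended
to a central vertex `none`. -/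
def subdividedStar {t : ℕ} (l : Fin t → ℕ) :
    SimpleGraph (Option (Σ i : Fin t, Fin (l i))) :=
  SimpleGraph.fromRel fun a b =>
    match a, b with
    | none, some ⟨_, j⟩ => (j : ℕ) = 0
    | some ⟨i, j⟩, some ⟨i', j'⟩ => (i : ℕ) = (i' : ℕ) ∧ (j : ℕ) + 1 = (j' : ℕ)
    | _, _ => False

/-- The graph `G` with a path on `k` new vertices appended at the vertex `u`. -/
def appendPath {V : Type*} (G : SimpleGraph V) (u : V) (k : ℕ) :
    SimpleGraph (V ⊕ Fin k) :=
  SimpleGraph.fromRel fun a b =>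
    match a, b with
    | Sum.inl x, Sum.inl y => G.Adj x y
    | Sum.inl x, Sum.inr j => x = u ∧ (j : ℕ) = 0
    | Sum.inr j, Sum.inr j' => (j : ℕ) + 1 = (j' : ℕ)
    | _, _ => False

open Finset

theorem mex_notMem {S : Set ℕ} (hS : S.Finite) : mex S ∉ S :=
  Nat.sInf_mem hS.infinite_compl.nonempty

theorem mex_eq_zero {S : Set ℕ} (h : 0 ∉ S) : mex S = 0 :=
  Nat.sInf_eq_zero.mpr (Or.inl h)

theorem mex_eq_one {S : Set ℕ} (hS : S.Finite) (h0 : 0 ∈ S) (h1 : 1 ∉ S) : mex S = 1 := by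
  have : mex S ≤ 1 := Nat.sInf_le h1
  have : mex S ≠ 0 := fun h => mex_notMem hS (h ▸ h0)
  omega

theorem one_lt_mex {S : Set ℕ} (hS : S.Finite) (h0 : 0 ∈ S) (h1 : 1 ∈ S) : 1 < mex S := by
  have := mex_notMem hS
  by_contra h
  interval_cases hm : mex S <;> simp_all

section Options

variable {V : Type*} [DecidableEq V] (G : SimpleGraph V) (L : Set ℕ)

def csgOptions (s : Finset V) : Set ℕ :=
  Set.range fun t : {t : Finset V // CsgMove G L s t} => csgGrundy G L t.1

theorem csgGrundy_eq_mex (s : Finset V) : csgGrundy G L s = mex (csgOptions G L s) := by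
  rw [csgGrundy, csgOptions]

theorem mem_csgOptions {s : Finset V} {n : ℕ} :
    n ∈ csgOptions G L s ↔ ∃ t, CsgMove G L s t ∧ csgGrundy G L t = n := by
  simp [csgOptions]

theorem csgOptions_finite (s : Finset V) : (csgOptions G L s).Finite := by
  refine (s.powerset.finite_toSet.image (csgGrundy G L)).subset ?_
  rintro _ ⟨t, rfl⟩
  exact ⟨t.1, by simpa using t.2.1, rfl⟩

end Options

section Removal

variable {V : Type*} [DecidableEq V] (G : SimpleGraph V)

def ConnRemovable (s : Finset V) (d : ℕ) : Prop :=
  ∃ t ⊆ s, #(s \ t) = d ∧ ConnOn G ↑(s \ t) ∧ (t = ∅ ∨ ConnOn G ↑t)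

def ConnRemovableExceptHalf : Prop :=
  ∀ s : Finset V, ConnOn G ↑s → ∀ d, 1 ≤ d → d ≤ #s → (d = 1 ∨ #s ≠ 2 * d) →
    ConnRemovable G s d

variable {G}

theorem ConnRemovable.exists_csgMove {s : Finset V} {d N : ℕ} (h : ConnRemovable G s d)
    (hd : d ∈ Set.Icc 1 N) : ∃ t, CsgMove G (Set.Icc 1 N) s t ∧ #t + d = #s := by
  obtain ⟨t, hts, rfl, hA, ht⟩ := h
  refine ⟨t, ⟨hts, card_pos.1 (by have := hd.1; omega), hd, hA, ht⟩, ?_⟩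
  rw [add_comm, card_sdiff_add_card_eq_card hts]

theorem connRemovable_card_self {s : Finset V} (hs : ConnOn G ↑s) : ConnRemovable G s #s :=
  ⟨∅, empty_subset s, by rw [sdiff_empty], by rwa [sdiff_empty], Or.inl rfl⟩

theorem ConnRemovable.of_eq_union {s A B : Finset V} {d : ℕ} (h : s = A ∪ B) (hd : #A = d)
    (hAB : Disjoint A B) (hA : ConnOn G ↑A) (hB : ConnOn G ↑B) : ConnRemovable G s d := by
  subst h hd
  exact ⟨B, subset_union_right, by rw [union_sdiff_cancel_right hAB],
    by rwa [union_sdiff_cancel_right hAB], Or.inr hB⟩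

end Removal

theorem eq_zero_of_add_modEq_self {m a d : ℕ} (hd : d < m) (h : a + d ≡ a [MOD m]) : d = 0 := by
  have : d ≡ 0 [MOD m] := Nat.ModEq.add_left_cancel' a h
  rwa [Nat.ModEq, Nat.mod_eq_of_lt hd, Nat.zero_mod] at this

section Game

variable {V : Type*} [DecidableEq V] {G : SimpleGraph V} {N : ℕ}

theorem CsgMove.card_mod_ne {s t : Finset V} (h : CsgMove G (Set.Icc 1 N) s t) :
    #t % (N + 1) ≠ #s % (N + 1) := by
  obtain ⟨hd1, hdN⟩ := h.2.2.1
  have hcard := card_sdiff_add_card_eq_card h.1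
  intro hts
  have := eq_zero_of_add_modEq_self (m := N + 1) (a := #t) (d := #(s \ t)) (by omega)
    (by rw [show #t + #(s \ t) = #s by omega]; exact hts.symm)
  omega

theorem exists_csgMove_card_mod_eq (hG : ConnRemovableExceptHalf G) {s : Finset V}
    (hs : ConnOn G ↑s) {e : ℕ} (he1 : e ≤ 1) (he : e < #s % (N + 1)) :
    ∃ t, CsgMove G (Set.Icc 1 N) s t ∧ #t % (N + 1) = e := by
  set m := N + 1
  set r := #s % m
  have hrm : r < m := Nat.mod_lt _ (by omega)
  have hdiv : m * (#s / m) + r = #s := Nat.div_add_mod _ _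
  -- a move removing half of `s` would give `r ≡ 2 * e`, so `r = 2` and `e = 1`
  have hhalf : r - e = 1 ∨ #s ≠ 2 * (r - e) := by
    refine or_iff_not_imp_left.2 fun hd1 hs2 => hd1 ?_
    have := eq_zero_of_add_modEq_self (m := m) (a := r) (d := r - 2 * e) (by omega)
      (by rw [show r + (r - 2 * e) = #s by omega]; exact (Nat.mod_modEq _ _).symm)
    omega
  obtain ⟨t, ht, hcard⟩ := (hG s hs (r - e) (by omega) (by omega) hhalf).exists_csgMove
    (N := N) ⟨by omega, by omega⟩
  refine ⟨t, ht, ?_⟩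
  rw [show #t = m * (#s / m) + e by omega, Nat.mul_add_mod, Nat.mod_eq_of_lt (by omega)]

theorem csgGrundy_Icc_step {s : Finset V} (hs : s = ∅ ∨ ConnOn G ↑s)
    (hG : ConnRemovableExceptHalf G)
    (ih : ∀ t, CsgMove G (Set.Icc 1 N) s t →
      ∀ e ≤ 1, csgGrundy G (Set.Icc 1 N) t = e ↔ #t % (N + 1) = e) :
    ∀ e ≤ 1, csgGrundy G (Set.Icc 1 N) s = e ↔ #s % (N + 1) = e := by
  have hfin := csgOptions_finite G (Set.Icc 1 N) s
  have hreach : ∀ e ≤ 1, e < #s % (N + 1) → e ∈ csgOptions G (Set.Icc 1 N) s := by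
    intro e he1 he
    have hs' : ConnOn G ↑s := hs.resolve_left (by rintro rfl; simp at he)
    obtain ⟨t, ht, hte⟩ := exists_csgMove_card_mod_eq hG hs' he1 he
    exact (mem_csgOptions G _).2 ⟨t, ht, (ih t ht e he1).2 hte⟩
  have hskip : ∀ e ≤ 1, e = #s % (N + 1) → e ∉ csgOptions G (Set.Icc 1 N) s := by
    rintro e he1 rfl hmem
    obtain ⟨t, ht, hg⟩ := (mem_csgOptions G _).1 hmem
    exact ht.card_mod_ne ((ih t ht _ he1).1 hg)
  rw [csgGrundy_eq_mex]
  intro e he1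
  obtain hr0 | hr1 | hr2 : #s % (N + 1) = 0 ∨ #s % (N + 1) = 1 ∨ 2 ≤ #s % (N + 1) := by omega
  · rw [mex_eq_zero (hskip 0 zero_le_one hr0.symm)]
    omega
  · rw [mex_eq_one hfin (hreach 0 zero_le_one (by omega)) (hskip 1 le_rfl hr1.symm)]
    omega
  · have := one_lt_mex hfin (hreach 0 zero_le_one (by omega)) (hreach 1 le_rfl (by omega))
    omega

theorem csgGrundy_Icc_of_connRemovableExceptHalf (hG : ConnRemovableExceptHalf G)
    (s : Finset V) (hs : s = ∅ ∨ ConnOn G ↑s) :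
    ∀ e ≤ 1, csgGrundy G (Set.Icc 1 N) s = e ↔ #s % (N + 1) = e := by
  induction s using Finset.strongInduction with
  | H s ih =>
    exact csgGrundy_Icc_step hs hG fun t ht =>
      ih t (ht.1.ssubset_of_ne fun h => by simpa [h] using ht.2.1) ht.2.2.2.2

end Game

section Connectivity

variable {V : Type*} {G : SimpleGraph V}

theorem connOn_singleton (v : V) : ConnOn G {v} := by
  rw [ConnOn, induce_singleton_eq_top]
  exact connected_top

theorem connOn_image_Icc (f : ℕ → V) (hf : ∀ x, G.Adj (f x) (f (x + 1))) {a b : ℕ}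
    (hab : a ≤ b) : ConnOn G (f '' Set.Icc a b) := by
  induction b, hab using Nat.le_induction with
  | base => simpa using connOn_singleton (f a)
  | succ b hab ih =>
    have hIcc : Set.Icc a (b + 1) = Set.Icc a b ∪ {b + 1} := by
      ext x; simp only [Set.mem_union, Set.mem_Icc, Set.mem_singleton_iff]; omega
    rw [hIcc, Set.image_union, Set.image_singleton]
    exact connected_induce_union ih.preconnected (connOn_singleton _).preconnected
      ⟨b, ⟨hab, le_rfl⟩, rfl⟩ rfl (hf b)

theorem ConnOn.exists_adj_boundary {s : Set V} (hs : ConnOn G s) {u v : V} (hu : u ∈ s)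
    (hv : v ∈ s) {S : Set V} (huS : u ∈ S) (hvS : v ∉ S) :
    ∃ x ∈ s, ∃ y ∈ s, x ∈ S ∧ y ∉ S ∧ G.Adj x y := by
  obtain ⟨p⟩ := hs.preconnected ⟨u, hu⟩ ⟨v, hv⟩
  obtain ⟨⟨⟨x, y⟩, hxy⟩, -, hx, hy⟩ := p.exists_boundary_dart (Subtype.val ⁻¹' S) huS hvS
  exact ⟨x, x.2, y, y.2, hx, hy, hxy⟩

end Connectivity

section Embedding

variable {V W : Type*} {G : SimpleGraph V} {H : SimpleGraph W}

theorem connOn_image_iff (f : G ↪g H) (s : Set V) : ConnOn H (f '' s) ↔ ConnOn G s :=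
  (show G.induce s ≃g H.induce (f '' s) from
    { toEquiv := Equiv.Set.image f s f.injective
      map_rel_iff' := f.map_adj_iff }).connected_iff.symm

theorem connOn_map_iff (f : G ↪g H) (s : Finset V) :
    ConnOn H ↑(s.map f.toEmbedding) ↔ ConnOn G ↑s := by
  rw [coe_map]
  exact connOn_image_iff f s

variable [DecidableEq V] [DecidableEq W]

theorem ConnRemovable.of_map (f : G ↪g H) {s : Finset V} {d : ℕ}
    (h : ConnRemovable H (s.map f.toEmbedding) d) : ConnRemovable G s d := by
  obtain ⟨_, hts', hcard, hA, ht⟩ := h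
  obtain ⟨t, hts, rfl⟩ := subset_map_iff.1 hts'
  rw [← Finset.map_sdiff] at hcard hA
  rw [card_map] at hcard
  rw [connOn_map_iff] at hA
  rw [map_eq_empty, connOn_map_iff] at ht
  exact ⟨t, hts, hcard, hA, ht⟩

theorem ConnRemovableExceptHalf.of_embedding (f : G ↪g H) (hH : ConnRemovableExceptHalf H) :
    ConnRemovableExceptHalf G := by
  intro s hs d hd1 hds hhalf
  rw [← connOn_map_iff f] at hs
  rw [← card_map f.toEmbedding] at hds hhalf
  exact (hH _ hs d hd1 hds hhalf).of_map f

end Embedding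

def pendantLine (c : ℕ) : SimpleGraph (Option ℕ) where
  Adj u v := match u, v with
    | some x, some y => x + 1 = y ∨ y + 1 = x
    | none, some y => y = c
    | some x, none => x = c
    | none, none => False
  symm := ⟨by rintro (_ | x) (_ | y) h <;> grind⟩
  loopless := ⟨by rintro (_ | x) h <;> grind⟩

namespace pendantLine

variable {c : ℕ}

@[simp] theorem adj_some_some {x y : ℕ} :
    (pendantLine c).Adj (some x) (some y) ↔ x + 1 = y ∨ y + 1 = x := Iff.rfl

@[simp] theorem adj_none_some {y : ℕ} : (pendantLine c).Adj none (some y) ↔ y = c := Iff.rfl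

@[simp] theorem adj_some_none {x : ℕ} : (pendantLine c).Adj (some x) none ↔ x = c := Iff.rfl

theorem connOn_segment {a b : ℕ} (hab : a ≤ b) :
    ConnOn (pendantLine c) ↑((Icc a b).map Function.Embedding.some) := by
  rw [coe_map, coe_Icc]
  exact connOn_image_Icc some (fun x => by simp) hab

theorem connOn_insertNone {a b : ℕ} (hac : a ≤ c) (hcb : c ≤ b) :
    ConnOn (pendantLine c) ↑(insertNone (Icc a b)) := by
  have : (↑(insertNone (Icc a b)) : Set (Option ℕ)) = ↑((Icc a b).map Function.Embedding.some) ∪ {none} := by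
    ext (_ | x) <;> simp
  rw [this]
  exact connected_induce_union (connOn_segment (hac.trans hcb)).preconnected
    (connOn_singleton _).preconnected (v := some c) (by simp [hac, hcb]) rfl (by simp)

theorem connRemovable_segment {a b d : ℕ} (hd1 : 1 ≤ d) (hd : d < b + 1 - a) :
    ConnRemovable (pendantLine c) ((Icc a b).map Function.Embedding.some) d := by
  refine ConnRemovable.of_eq_union (A := (Icc (b + 1 - d) b).map Function.Embedding.some)
    (B := (Icc a (b - d)).map Function.Embedding.some) ?_ ?_ ?_
    (connOn_segment (by omega)) (connOn_segment (by omega))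
  · ext (_ | x) <;> simp; omega
  · simp only [card_map, Nat.card_Icc]
    omega
  · rw [Finset.disjoint_left]; rintro (_ | x) <;> simp; omega

theorem connRemovable_insertNone_arm {a b d : ℕ} (hac : a ≤ c) (hcb : c ≤ b) (hd1 : 1 ≤ d)
    (hd : d ≤ b - c ∨ d ≤ c - a) : ConnRemovable (pendantLine c) (insertNone (Icc a b)) d := by
  rcases hd with hd | hd
  · refine ConnRemovable.of_eq_union (A := (Icc (b + 1 - d) b).map Function.Embedding.some)
      (B := insertNone (Icc a (b - d))) ?_ ?_ ?_
      (connOn_segment (by omega)) (connOn_insertNone (by omega) (by omega))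
    · ext (_ | x) <;> simp; omega
    · simp only [card_map, Nat.card_Icc]
      omega
    · rw [Finset.disjoint_left]; rintro (_ | x) <;> simp; omega
  · refine ConnRemovable.of_eq_union (A := (Icc a (a + d - 1)).map Function.Embedding.some)
      (B := insertNone (Icc (a + d) b)) ?_ ?_ ?_
      (connOn_segment (by omega)) (connOn_insertNone (by omega) (by omega))
    · ext (_ | x) <;> simp; omega
    · simp only [card_map, Nat.card_Icc]
      omega
    · rw [Finset.disjoint_left]; rintro (_ | x) <;> simp; omega

theorem connRemovable_insertNone_pendant {a b d : ℕ} (hac : a ≤ c) (hcb : c ≤ b)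
    (hd : d < b + 2 - a) (hd' : c + 2 ≤ a + d ∨ b + 2 ≤ c + d) :
    ConnRemovable (pendantLine c) (insertNone (Icc a b)) d := by
  rcases hd' with hd' | hd'
  · refine ConnRemovable.of_eq_union (A := insertNone (Icc a (a + d - 2)))
      (B := (Icc (a + d - 1) b).map Function.Embedding.some) ?_ ?_ ?_
      (connOn_insertNone (by omega) (by omega)) (connOn_segment (by omega))
    · ext (_ | x) <;> simp; omega
    · simp only [card_insertNone, Nat.card_Icc]
      omega
    · rw [Finset.disjoint_left]; rintro (_ | x) <;> simp; omega
  · refine ConnRemovable.of_eq_union (A := insertNone (Icc (b + 2 - d) b))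
      (B := (Icc a (b + 1 - d)).map Function.Embedding.some) ?_ ?_ ?_
      (connOn_insertNone (by omega) (by omega)) (connOn_segment (by omega))
    · ext (_ | x) <;> simp; omega
    · simp only [card_insertNone, Nat.card_Icc]
      omega
    · rw [Finset.disjoint_left]; rintro (_ | x) <;> simp; omega

theorem connRemovable_insertNone {a b d : ℕ} (hac : a ≤ c) (hcb : c ≤ b) (hd1 : 1 ≤ d)
    (hd : d < b + 2 - a) (hhalf : d = 1 ∨ b + 2 - a ≠ 2 * d) :
    ConnRemovable (pendantLine c) (insertNone (Icc a b)) d := by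
  obtain rfl | hd1 := hd1.eq_or_lt
  · refine ConnRemovable.of_eq_union (A := {none}) (B := (Icc a b).map Function.Embedding.some)
      ?_ (card_singleton none) (by simp) (by simpa using connOn_singleton none)
      (connOn_segment (by omega))
    ext (_ | x) <;> simp
  obtain hd' | hd' : (d ≤ b - c ∨ d ≤ c - a) ∨ (c + 2 ≤ a + d ∨ b + 2 ≤ c + d) := by omega
  · exact connRemovable_insertNone_arm hac hcb hd1.le hd'
  · exact connRemovable_insertNone_pendant hac hcb hd hd'

section Classification

variable {s : Finset (Option ℕ)} (hs : ConnOn (pendantLine c) ↑s)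
include hs

theorem some_mem_of_between {x y z : ℕ} (hx : some x ∈ s) (hz : some z ∈ s) (hxy : x ≤ y)
    (hyz : y ≤ z) : some y ∈ s := by
  obtain rfl | hxy := hxy.eq_or_lt
  · exact hx
  by_contra hy
  obtain ⟨u, hu, v, hv, huy, hvy, huv⟩ :=
    hs.exists_adj_boundary (S := {v | v.getD c < y}) hx hz hxy (by simpa using hyz)
  rcases u with _ | u <;> rcases v with _ | v <;>
    simp only [Set.mem_ofPred_eq, Option.getD_none, Option.getD_some, not_lt, SimpleGraph.irrefl,
      adj_none_some, adj_some_none, adj_some_some] at huy hvy huv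
  · omega
  · omega
  · obtain rfl : v = y := by omega
    exact hy hv

theorem some_mem_of_none_mem {x : ℕ} (hnone : none ∈ s) (hx : some x ∈ s) : some c ∈ s := by
  obtain ⟨u, -, v, hv, rfl, hvu, huv⟩ :=
    hs.exists_adj_boundary (S := {none}) hnone hx rfl (by simp)
  rcases v with _ | v
  · exact absurd rfl hvu
  · rwa [(adj_none_some.1 huv)] at hv

theorem eq_none_or_segment_or_insertNone : s = {none} ∨ (∃ a b, a ≤ b ∧ s = (Icc a b).map Function.Embedding.some) ∨
    ∃ a b, a ≤ c ∧ c ≤ b ∧ s = insertNone (Icc a b) := by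
  rcases (eraseNone s).eq_empty_or_nonempty with hz | hz
  · left
    obtain ⟨⟨w, hw⟩⟩ := hs.nonempty
    have hsome : ∀ x, some x ∉ s := fun x hx => by simpa [hz] using mem_eraseNone.2 hx
    obtain rfl : w = none := by
      rcases w with _ | x
      · rfl
      · exact absurd hw (hsome x)
    ext (_ | x)
    · simpa using hw
    · simpa using hsome x
  set a := (eraseNone s).min' hz
  set b := (eraseNone s).max' hz
  have ha : some a ∈ s := mem_eraseNone.1 (min'_mem _ hz)
  have hb : some b ∈ s := mem_eraseNone.1 (max'_mem _ hz)
  have hIcc : eraseNone s = Icc a b := by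
    ext y
    rw [mem_Icc]
    refine ⟨fun hy => ⟨min'_le _ y hy, le_max' _ y hy⟩, fun ⟨hay, hyb⟩ => ?_⟩
    exact mem_eraseNone.2 (some_mem_of_between hs ha hb hay hyb)
  by_cases hnone : none ∈ s
  · have hc : c ∈ eraseNone s := mem_eraseNone.2 (some_mem_of_none_mem hs hnone ha)
    rw [hIcc, mem_Icc] at hc
    refine Or.inr (Or.inr ⟨a, b, hc.1, hc.2, ?_⟩)
    rw [← hIcc, insertNone_eraseNone, insert_eq_of_mem hnone]
  · refine Or.inr (Or.inl ⟨a, b, min'_le_max' _ hz, ?_⟩)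
    rw [← hIcc, map_some_eraseNone, erase_eq_of_notMem hnone]

end Classification

theorem connRemovableExceptHalf (c : ℕ) : ConnRemovableExceptHalf (pendantLine c) := by
  intro s hs d hd1 hds hhalf
  obtain hds | hds := hds.lt_or_eq
  · rcases eq_none_or_segment_or_insertNone hs with rfl | ⟨a, b, hab, rfl⟩ | ⟨a, b, hac, hcb, rfl⟩
    · simp only [card_singleton] at hds
      omega
    · simp only [card_map, Nat.card_Icc] at hds
      exact connRemovable_segment hd1 (by omega)
    · simp only [card_insertNone, Nat.card_Icc] at hds hhalf
      exact connRemovable_insertNone hac hcb hd1 (by omega) (by omega)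
  · exact hds ▸ connRemovable_card_self hs

end pendantLine

section SubdividedStar

variable (k l : ℕ)

def starToLine : Option (Σ i : Fin 3, Fin (![1, k, l] i)) → Option ℕ
  | none => some k
  | some ⟨0, _⟩ => none
  | some ⟨1, j⟩ => some (k - 1 - j)
  | some ⟨2, j⟩ => some (k + 1 + j)

theorem starToLine_injective : Function.Injective (starToLine k l) := by
  rintro (_ | ⟨i, j⟩) (_ | ⟨i', j'⟩) h
  all_goals try fin_cases i
  all_goals try fin_cases i'
  all_goals try have := j.isLt
  all_goals try have := j'.isLt
  all_goals simp [starToLine, Fin.ext_iff, sigma_mk_injective.eq_iff] at *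
  all_goals omega

theorem starToLine_adj_iff (u v : Option (Σ i : Fin 3, Fin (![1, k, l] i))) :
    (pendantLine k).Adj (starToLine k l u) (starToLine k l v) ↔
      (subdividedStar ![1, k, l]).Adj u v := by
  rcases u with _ | ⟨i, j⟩ <;> rcases v with _ | ⟨i', j'⟩
  all_goals try fin_cases i
  all_goals try fin_cases i'
  all_goals try have := j.isLt
  all_goals try have := j'.isLt
  all_goals simp [starToLine, subdividedStar, Fin.ext_iff, sigma_mk_injective.eq_iff] at *
  all_goals omega

theorem starToLine_mem (v : Option (Σ i : Fin 3, Fin (![1, k, l] i))) :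
    starToLine k l v ∈ insertNone (Icc 0 (k + l)) := by
  rcases v with _ | ⟨i, j⟩
  all_goals try fin_cases i
  all_goals try have := j.isLt
  all_goals simp [starToLine] at *
  all_goals omega

def subdividedStarEmbedding : subdividedStar ![1, k, l] ↪g pendantLine k :=
  ⟨⟨starToLine k l, starToLine_injective k l⟩, starToLine_adj_iff k l _ _⟩

theorem card_subdividedStar :
    Fintype.card (Option (Σ i : Fin 3, Fin (![1, k, l] i))) = k + l + 2 := by
  simp only [Fintype.card_option, Fintype.card_sigma, Fintype.card_fin, Fin.sum_univ_three,
    Matrix.cons_val_zero, Matrix.cons_val_one, Matrix.cons_val]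
  omega

theorem map_univ_subdividedStarEmbedding :
    univ.map (subdividedStarEmbedding k l).toEmbedding = insertNone (Icc 0 (k + l)) := by
  refine eq_of_subset_of_card_le (fun _ hv => ?_) ?_
  · obtain ⟨v, -, rfl⟩ := mem_map.1 hv
    exact starToLine_mem k l v
  · simp only [card_insertNone, Nat.card_Icc, card_map, card_univ, card_subdividedStar]
    omega

theorem connOn_univ_subdividedStar :
    ConnOn (subdividedStar ![1, k, l]) ↑(univ : Finset (Option (Σ i : Fin 3, Fin (![1, k, l] i)))) := by
  rw [← connOn_map_iff (subdividedStarEmbedding k l), map_univ_subdividedStarEmbedding]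
  exact pendantLine.connOn_insertNone (Nat.zero_le k) (Nat.le_add_right k l)

theorem connRemovableExceptHalf_subdividedStar :
    ConnRemovableExceptHalf (subdividedStar ![1, k, l]) :=
  (pendantLine.connRemovableExceptHalf k).of_embedding (subdividedStarEmbedding k l)

end SubdividedStar

theorem stmt11_general (N k l : ℕ) :
    ((k + l + 2) % (N + 1) = 0 →
      csgGrundy (subdividedStar ![1, k, l]) (Set.Icc 1 N) Finset.univ = 0) ∧
    ((k + l + 2) % (N + 1) = 1 →
      csgGrundy (subdividedStar ![1, k, l]) (Set.Icc 1 N) Finset.univ = 1) ∧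
    ((k + l + 2) % (N + 1) ≠ 0 → (k + l + 2) % (N + 1) ≠ 1 →
      1 < csgGrundy (subdividedStar ![1, k, l]) (Set.Icc 1 N) Finset.univ) := by
  have hpattern := csgGrundy_Icc_of_connRemovableExceptHalf (N := N)
    (connRemovableExceptHalf_subdividedStar k l) univ (Or.inr (connOn_univ_subdividedStar k l))
  rw [card_univ, card_subdividedStar] at hpattern
  refine ⟨(hpattern 0 zero_le_one).2, (hpattern 1 le_rfl).2, fun hr0 hr1 => ?_⟩
  have := mt (hpattern 0 zero_le_one).1 hr0
  have := mt (hpattern 1 le_rfl).1 hr1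
  omega

/-- For CSG({1,…,N}), N ≥ 3: the Grundy value of S(1,k,l) is 0 if its number of
vertices k+l+2 is ≡ 0 mod (N+1), is 1 if k+l+2 ≡ 1 mod (N+1), and exceeds 1
otherwise. -/
theorem stmt11 (N k l : ℕ) (hN : 3 ≤ N) :
    ((k + l + 2) % (N + 1) = 0 →
      csgGrundy (subdividedStar ![1, k, l]) (Set.Icc 1 N) Finset.univ = 0) ∧
    ((k + l + 2) % (N + 1) = 1 →
      csgGrundy (subdividedStar ![1, k, l]) (Set.Icc 1 N) Finset.univ = 1) ∧
    ((k + l + 2) % (N + 1) ≠ 0 → (k + l + 2) % (N + 1) ≠ 1 →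
      1 < csgGrundy (subdividedStar ![1, k, l]) (Set.Icc 1 N) Finset.univ) :=
  stmt11_general N k l
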